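/- arXiv:1711.02929 — 11 statements merged into one kernel-verified Lean document; each statement's English description precedes it below -/
import Mathlib

section
/- Let f : P → Q be an order embedding between partially ordered sets such that f[P] is order dense in Q, and let M ⊆ P. Then the infimum of M exists in P if and only if the infimum of f[M] exists in Q and is an element of f[P]. -/
universe u v

/-- A relation making a type into a nonempty upward-directed preordered index set for nets. -/
def IsNetIndex {A : Type u} (r : A → A → Prop) : Prop :=
  Nonempty A ∧ Reflexive r ∧ Transitive r ∧ ∀ a b : A, ∃ c : A, r a c ∧ r b c

/-- The net `f` is increasing (w.r.t. the index relation `r`) with supremum `x`, `f ↑ x`. -/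
def IncrTo {P : Type v} [Preorder P] {A : Type u} (r : A → A → Prop) (f : A → P) (x : P) :
    Prop :=
  (∀ a b : A, r a b → f a ≤ f b) ∧ IsLUB (Set.range f) x

/-- The net `f` is decreasing (w.r.t. the index relation `r`) with infimum `x`, `f ↓ x`. -/
def DecrTo {P : Type v} [Preorder P] {A : Type u} (r : A → A → Prop) (f : A → P) (x : P) :
    Prop :=
  (∀ a b : A, r a b → f b ≤ f a) ∧ IsGLB (Set.range f) x

/-- o₁-convergence of the net `f` to `x`. -/
def OConv1 {P : Type v} [Preorder P] {A : Type u} (r : A → A → Prop) (f : A → P) (x : P) :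
    Prop :=
  ∃ xh xl : A → P, IncrTo r xh x ∧ DecrTo r xl x ∧ ∀ a : A, xh a ≤ f a ∧ f a ≤ xl a

/-- o₂-convergence of the net `f` to `x`. -/
def OConv2 {P : Type v} [Preorder P] {A : Type u} (r : A → A → Prop) (f : A → P) (x : P) :
    Prop :=
  ∃ (xh xl : A → P) (a₀ : A), IncrTo r xh x ∧ DecrTo r xl x ∧
    ∀ a : A, r a₀ a → xh a ≤ f a ∧ f a ≤ xl a

/-- o₃-convergence of the net `f` to `x`. -/
def OConv3 {P : Type v} [Preorder P] {A : Type u} (r : A → A → Prop) (f : A → P) (x : P) :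
    Prop :=
  ∃ (B : Type u) (C : Type u) (rB : B → B → Prop) (rC : C → C → Prop)
    (xh : B → P) (xl : C → P) (η : B × C → A),
    IsNetIndex rB ∧ IsNetIndex rC ∧ IncrTo rB xh x ∧ DecrTo rC xl x ∧
    ∀ (b : B) (c : C) (a : A), r (η (b, c)) a → xh b ≤ f a ∧ f a ≤ xl c

/-- o_i-convergence, `i ∈ {1,2,3}`. -/
def OConv (i : ℕ) {P : Type v} [Preorder P] {A : Type u} (r : A → A → Prop) (f : A → P)
    (x : P) : Prop :=
  match i with
  | 1 => OConv1 r f x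
  | 2 => OConv2 r f x
  | _ => OConv3 r f x

/-- `U` is a net catching set for `x`. -/
def NetCatching {P : Type v} [Preorder P] (U : Set P) (x : P) : Prop :=
  ∀ (A : Type v) (r : A → A → Prop), IsNetIndex r →
    ∀ xh xl : A → P, IncrTo r xh x → DecrTo r xl x →
      ∃ a : A, Set.Icc (xh a) (xl a) ⊆ U

/-- `O` is order open: a net catching set for each of its points. -/
def OrderOpen {P : Type v} [Preorder P] (O : Set P) : Prop :=
  ∀ x ∈ O, NetCatching O x

/-- `C` is order closed: its complement is order open. -/
def OrderClosed {P : Type v} [Preorder P] (C : Set P) : Prop :=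
  OrderOpen Cᶜ

/-- Convergence of the net `f` to `x` with respect to the order topology `τ_o`. -/
def TauConv {P : Type v} [Preorder P] {A : Type u} (r : A → A → Prop) (f : A → P) (x : P) :
    Prop :=
  ∀ O : Set P, OrderOpen O → x ∈ O → ∃ a₀ : A, ∀ a : A, r a₀ a → f a ∈ O

/-- `f` is o_i-continuous: it preserves o_i-convergence of nets. -/
def OCont (i : ℕ) {P Q : Type v} [Preorder P] [Preorder Q] (f : P → Q) : Prop :=
  ∀ (A : Type v) (r : A → A → Prop), IsNetIndex r →
    ∀ (g : A → P) (x : P), OConv i r g x → OConv i r (f ∘ g) (f x)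

/-- `f` is continuous w.r.t. the order topologies on `P` and `Q`. -/
def OrderContinuousMap {P Q : Type v} [Preorder P] [Preorder Q] (f : P → Q) : Prop :=
  ∀ O : Set Q, OrderOpen O → OrderOpen (f ⁻¹' O)

/-- `M` is order dense in `P`. -/
def OrderDense {P : Type v} [Preorder P] (M : Set P) : Prop :=
  ∀ x : P, IsLUB {m ∈ M | m ≤ x} x ∧ IsGLB {m ∈ M | x ≤ m} x
theorem orderEmbedding_isGLB_iff {P Q : Type v} [PartialOrder P] [PartialOrder Q]
    (f : P ↪o Q) (hd : OrderDense (Set.range f)) (M : Set P) :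
    (∃ p : P, IsGLB M p) ↔ ∃ q : Q, IsGLB (⇑f '' M) q ∧ q ∈ Set.range f := by
  constructor
  · rintro ⟨p, hlb, hgr⟩
    refine ⟨f p, ⟨?_, ?_⟩, ⟨p, rfl⟩⟩
    · rintro _ ⟨m, hm, rfl⟩
      exact f.le_iff_le.mpr (hlb hm)
    · intro q hq
      -- q = sup {y ∈ range f | y ≤ q}; each such y = f x with x lower bound of M
      have hsup := (hd q).1
      apply hsup.2
      rintro _ ⟨⟨x, rfl⟩, hxq⟩
      refine f.le_iff_le.mpr (hgr ?_)
      intro m hm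
      exact f.le_iff_le.mp (le_trans hxq (hq ⟨m, hm, rfl⟩))
  · rintro ⟨_, hq, ⟨x, rfl⟩⟩
    refine ⟨x, ?_, ?_⟩
    · intro m hm
      exact f.le_iff_le.mp (hq.1 ⟨m, hm, rfl⟩)
    · intro y hy
      refine f.le_iff_le.mp (hq.2 ?_)
      rintro _ ⟨m, hm, rfl⟩
      exact f.le_iff_le.mpr (hy hm)
end

section
/- Let P be a partially ordered set, U ⊆ P and x ∈ P. Then U is a net catching set for x if and only if for all upward directed subsets M̂ ⊆ P and downward directed subsets M̌ ⊆ P with sup M̂ = x = inf M̌, there exist m̂ ∈ M̂ and m̌ ∈ M̌ such that the order interval [m̂, m̌] is contained in U. -/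
universe u v

theorem netCatching_iff_directedSets {P : Type v} [PartialOrder P] (U : Set P) (x : P) :
    NetCatching U x ↔
      ∀ Mh Ml : Set P, Mh.Nonempty → Ml.Nonempty →
        DirectedOn (· ≤ ·) Mh → DirectedOn (· ≥ ·) Ml →
        IsLUB Mh x → IsGLB Ml x →
        ∃ mh ∈ Mh, ∃ ml ∈ Ml, Set.Icc mh ml ⊆ U := by
  constructor
  · intro h Mh Ml hMh hMl dMh dMl lub glb
    set A := {p : P × P // p.1 ∈ Mh ∧ p.2 ∈ Ml} with hA
    set r : A → A → Prop := fun a b => a.1.1 ≤ b.1.1 ∧ b.1.2 ≤ a.1.2 with hr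
    have hNI : IsNetIndex r := by
      refine ⟨⟨⟨(hMh.choose, hMl.choose), hMh.choose_spec, hMl.choose_spec⟩⟩,
        fun a => ⟨le_refl _, le_refl _⟩,
        fun a b c hab hbc => ⟨le_trans hab.1 hbc.1, le_trans hbc.2 hab.2⟩, ?_⟩
      intro a b
      obtain ⟨c1, hc1, ha1, hb1⟩ := dMh a.1.1 a.2.1 b.1.1 b.2.1
      obtain ⟨c2, hc2, ha2, hb2⟩ := dMl a.1.2 a.2.2 b.1.2 b.2.2
      exact ⟨⟨(c1, c2), hc1, hc2⟩, ⟨ha1, ha2⟩, ⟨hb1, hb2⟩⟩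
    have hrange1 : Set.range (fun a : A => a.1.1) = Mh := by
      ext y
      constructor
      · rintro ⟨a, rfl⟩; exact a.2.1
      · intro hy; exact ⟨⟨(y, hMl.choose), hy, hMl.choose_spec⟩, rfl⟩
    have hrange2 : Set.range (fun a : A => a.1.2) = Ml := by
      ext y
      constructor
      · rintro ⟨a, rfl⟩; exact a.2.2
      · intro hy; exact ⟨⟨(hMh.choose, y), hMh.choose_spec, hy⟩, rfl⟩
    obtain ⟨a, ha⟩ := h A r hNI (fun a => a.1.1) (fun a => a.1.2)
      ⟨fun a b hab => hab.1, by rw [hrange1]; exact lub⟩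
      ⟨fun a b hab => hab.2, by rw [hrange2]; exact glb⟩
    exact ⟨a.1.1, a.2.1, a.1.2, a.2.2, ha⟩
  · intro h A r hNI xh xl hinc hdec
    obtain ⟨⟨a0⟩, hrefl, htrans, hdir⟩ := hNI
    have dMh : DirectedOn (· ≤ ·) (Set.range xh) := by
      rintro _ ⟨a, rfl⟩ _ ⟨b, rfl⟩
      obtain ⟨c, hac, hbc⟩ := hdir a b
      exact ⟨xh c, ⟨c, rfl⟩, hinc.1 _ _ hac, hinc.1 _ _ hbc⟩
    have dMl : DirectedOn (· ≥ ·) (Set.range xl) := by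
      rintro _ ⟨a, rfl⟩ _ ⟨b, rfl⟩
      obtain ⟨c, hac, hbc⟩ := hdir a b
      exact ⟨xl c, ⟨c, rfl⟩, hdec.1 _ _ hac, hdec.1 _ _ hbc⟩
    obtain ⟨_, ⟨a, rfl⟩, _, ⟨b, rfl⟩, hU⟩ :=
      h (Set.range xh) (Set.range xl) ⟨xh a0, a0, rfl⟩ ⟨xl a0, a0, rfl⟩
        dMh dMl hinc.2 hdec.2
    obtain ⟨c, hac, hbc⟩ := hdir a b
    exact ⟨c, fun y hy => hU ⟨le_trans (hinc.1 _ _ hac) hy.1,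
      le_trans hy.2 (hdec.1 _ _ hbc)⟩⟩
end

section
/- Let P be a partially ordered set, (x_α)_{α∈A} a net in P and x ∈ P. If x_α o₃-converges to x, then x_α converges to x with respect to the order topology τ_o(P). -/
universe u v

theorem oConv3_tauConv {P : Type v} [PartialOrder P] {A : Type u} (r : A → A → Prop)
    (hA : IsNetIndex r) (f : A → P) (x : P) (h : OConv3 r f x) : TauConv r f x := by
  obtain ⟨B, C, rB, rC, xh, xl, η, hB, hC, hIncr, hDecr, hbd⟩ := h
  intro O hO hx
  obtain ⟨⟨b₀⟩, hrB, htB, hdB⟩ := hB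
  obtain ⟨⟨c₀⟩, hrC, htC, hdC⟩ := hC
  -- index set inside P × P
  set A' : Type v := {p : P × P // p.1 ∈ Set.range xh ∧ p.2 ∈ Set.range xl} with hA'
  set r' : A' → A' → Prop := fun a b => a.1.1 ≤ b.1.1 ∧ b.1.2 ≤ a.1.2 with hr'
  have hNet : IsNetIndex r' := by
    refine ⟨⟨⟨(xh b₀, xl c₀), ⟨b₀, rfl⟩, ⟨c₀, rfl⟩⟩⟩, fun a => ⟨le_refl _, le_refl _⟩,
      fun a b c hab hbc => ⟨hab.1.trans hbc.1, hbc.2.trans hab.2⟩, ?_⟩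
    rintro ⟨⟨p1, p2⟩, ⟨b1, hb1⟩, ⟨c1, hc1⟩⟩ ⟨⟨q1, q2⟩, ⟨b2, hb2⟩, ⟨c2, hc2⟩⟩
    obtain ⟨b3, hb13, hb23⟩ := hdB b1 b2
    obtain ⟨c3, hc13, hc23⟩ := hdC c1 c2
    exact ⟨⟨(xh b3, xl c3), ⟨b3, rfl⟩, ⟨c3, rfl⟩⟩,
      ⟨hb1 ▸ hIncr.1 b1 b3 hb13, hc1 ▸ hDecr.1 c1 c3 hc13⟩,
      ⟨hb2 ▸ hIncr.1 b2 b3 hb23, hc2 ▸ hDecr.1 c2 c3 hc23⟩⟩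
  set xh' : A' → P := fun a => a.1.1 with hxh'
  set xl' : A' → P := fun a => a.1.2 with hxl'
  have hrangeh : Set.range xh' = Set.range xh := by
    ext p
    constructor
    · rintro ⟨⟨⟨p1, p2⟩, ⟨b, hb⟩, hc⟩, rfl⟩; exact ⟨b, hb⟩
    · rintro ⟨b, hb⟩; exact ⟨⟨(xh b, xl c₀), ⟨b, rfl⟩, ⟨c₀, rfl⟩⟩, hb⟩
  have hrangel : Set.range xl' = Set.range xl := by
    ext p
    constructor
    · rintro ⟨⟨⟨p1, p2⟩, hb, ⟨c, hc⟩⟩, rfl⟩; exact ⟨c, hc⟩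
    · rintro ⟨c, hc⟩; exact ⟨⟨(xh b₀, xl c), ⟨b₀, rfl⟩, ⟨c, rfl⟩⟩, hc⟩
  have hI : IncrTo r' xh' x := ⟨fun a b hab => hab.1, hrangeh ▸ hIncr.2⟩
  have hD : DecrTo r' xl' x := ⟨fun a b hab => hab.2, hrangel ▸ hDecr.2⟩
  obtain ⟨a, hsub⟩ := hO x hx A' r' hNet xh' xl' hI hD
  obtain ⟨b, hb⟩ := a.2.1
  obtain ⟨c, hc⟩ := a.2.2
  refine ⟨η (b, c), fun a' ha' => hsub ?_⟩
  obtain ⟨h1, h2⟩ := hbd b c a' ha'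
  constructor
  · show a.1.1 ≤ f a'; rw [← hb]; exact h1
  · show f a' ≤ a.1.2; rw [← hc]; exact h2
end

section
/- Let P be a partially ordered set and x ∈ P such that for every p ≥ x there exists q ∈ P with p < q. Then there exists a net (x_α)_{α∈A} in P that o₂-converges to x but does not o₁-converge to x. -/
universe u v

theorem exists_oConv2_not_oConv1 {P : Type v} [PartialOrder P] (x : P)
    (h : ∀ p : P, x ≤ p → ∃ q : P, p < q) :
    ∃ (A : Type v) (r : A → A → Prop) (f : A → P),
      IsNetIndex r ∧ OConv2 r f x ∧ ¬ OConv1 r f x := by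
  classical
  haveI : Nonempty ({p : P // x ≤ p} × Bool) := ⟨(⟨x, le_rfl⟩, true)⟩
  refine ⟨{p : P // x ≤ p} × Bool, fun a b => a.2 ≤ b.2,
    fun a => if a.2 then x else a.1.val, ?_, ?_, ?_⟩
  · exact ⟨‹_›, fun a => le_rfl, fun _ _ _ h1 h2 => le_trans h1 h2,
      fun a b => ⟨(a.1, true), Bool.le_true _, Bool.le_true _⟩⟩
  · refine ⟨fun _ => x, fun _ => x, (⟨x, le_rfl⟩, true), ?_, ?_, ?_⟩
    · exact ⟨fun a b _ => le_rfl, by rw [Set.range_const]; exact isLUB_singleton⟩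
    · exact ⟨fun a b _ => le_rfl, by rw [Set.range_const]; exact isGLB_singleton⟩
    · intro a ha
      have ha' : true ≤ a.2 := ha
      have h2 : a.2 = true := by
        cases hb : a.2
        · rw [hb] at ha'; exact absurd ha' (by decide)
        · rfl
      simp [h2]
  · rintro ⟨xh, xl, hxh, hxl, hsq⟩
    have hxle : ∀ a, x ≤ xl a := fun a => hxl.2.1 (Set.mem_range_self a)
    set y := xl (⟨x, le_rfl⟩, false) with hy
    have hxy : x ≤ y := hxle _
    have hpy : ∀ p : P, x ≤ p → p ≤ y := by
      intro p hp
      have h1 : xl (⟨p, hp⟩, false) ≤ y := hxl.1 _ _ le_rfl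
      have h2 : p ≤ xl (⟨p, hp⟩, false) := by
        have := (hsq (⟨p, hp⟩, false)).2
        simpa using this
      exact h2.trans h1
    obtain ⟨q, hq⟩ := h y hxy
    exact absurd (hpy q (hxy.trans hq.le)) hq.not_ge
end

section
/- Let P be a partially ordered set, i ∈ {1,2,3} and C ⊆ P. Then C is order closed if and only if for every net (x_α)_{α∈A} in C with x_α →^{o_i} x ∈ P, we have x ∈ C. -/
universe u v

theorem orderClosed_iff_oConv_closed {P : Type v} [PartialOrder P] (i : ℕ)
    (hi : i ∈ ({1, 2, 3} : Set ℕ)) (C : Set P) :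
    OrderClosed C ↔
      ∀ (A : Type v) (r : A → A → Prop), IsNetIndex r →
        ∀ (f : A → P) (x : P), (∀ a : A, f a ∈ C) → OConv i r f x → x ∈ C := by

  have hi' : i = 1 ∨ i = 2 ∨ i = 3 := by simpa using hi
  constructor
  · intro hC A r hr f x hf hconv
    by_contra hx
    have hcatch : NetCatching Cᶜ x := hC x hx
    rcases hi' with h1 | h2 | h3
    · subst h1
      obtain ⟨xh, xl, hh, hl, hs⟩ := hconv
      obtain ⟨a, ha⟩ := hcatch A r hr xh xl hh hl
      exact ha ⟨(hs a).1, (hs a).2⟩ (hf a)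
    · subst h2
      obtain ⟨xh, xl, a₀, hh, hl, hs⟩ := hconv
      obtain ⟨a, ha⟩ := hcatch A r hr xh xl hh hl
      obtain ⟨a', ha0, ha1⟩ := hr.2.2.2 a₀ a
      have hs' := hs a' ha0
      exact ha ⟨le_trans (hh.1 a a' ha1) hs'.1, le_trans hs'.2 (hl.1 a a' ha1)⟩ (hf a')
    · subst h3
      obtain ⟨B, C', rB, rC, xh, xl, η, hB, hC', hh, hl, hs⟩ := hconv
      set r' : B × C' → B × C' → Prop := fun p q => rB p.1 q.1 ∧ rC p.2 q.2 with hr'def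
      have hr' : IsNetIndex r' := by
        refine ⟨⟨⟨hB.1.some, hC'.1.some⟩⟩, fun p => ⟨hB.2.1 p.1, hC'.2.1 p.2⟩,
          fun p q s hpq hqs => ⟨hB.2.2.1 hpq.1 hqs.1, hC'.2.2.1 hpq.2 hqs.2⟩, ?_⟩
        intro p q
        obtain ⟨b, hb1, hb2⟩ := hB.2.2.2 p.1 q.1
        obtain ⟨c, hc1, hc2⟩ := hC'.2.2.2 p.2 q.2
        exact ⟨⟨b, c⟩, ⟨hb1, hc1⟩, ⟨hb2, hc2⟩⟩
      have hrangeh : Set.range (fun p : B × C' => xh p.1) = Set.range xh := by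
        ext y
        constructor
        · rintro ⟨p, rfl⟩; exact ⟨p.1, rfl⟩
        · rintro ⟨b, rfl⟩; exact ⟨⟨b, hC'.1.some⟩, rfl⟩
      have hrangel : Set.range (fun p : B × C' => xl p.2) = Set.range xl := by
        ext y
        constructor
        · rintro ⟨p, rfl⟩; exact ⟨p.2, rfl⟩
        · rintro ⟨c, rfl⟩; exact ⟨⟨hB.1.some, c⟩, rfl⟩
      have hh' : IncrTo r' (fun p : B × C' => xh p.1) x :=
        ⟨fun p q hpq => hh.1 p.1 q.1 hpq.1, by rw [hrangeh]; exact hh.2⟩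
      have hl' : DecrTo r' (fun p : B × C' => xl p.2) x :=
        ⟨fun p q hpq => hl.1 p.2 q.2 hpq.2, by rw [hrangel]; exact hl.2⟩
      obtain ⟨⟨b, c⟩, hbc⟩ := hcatch (B × C') r' hr' _ _ hh' hl'
      have := hs b c (η (b, c)) (hr.2.1 _)
      exact hbc ⟨this.1, this.2⟩ (hf (η (b, c)))
  · intro h x hx A r hr xh xl hh hl
    by_contra hno
    have hex : ∀ a : A, ∃ p, p ∈ Set.Icc (xh a) (xl a) ∧ p ∈ C := by
      intro a
      by_contra hcon
      push_neg at hcon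
      exact hno ⟨a, fun p hp => hcon p hp⟩
    choose f hfI hfC using hex
    have hxC : x ∈ C := by
      apply h A r hr f x hfC
      rcases hi' with h1 | h2 | h3
      · subst h1
        exact ⟨xh, xl, hh, hl, fun a => ⟨(hfI a).1, (hfI a).2⟩⟩
      · subst h2
        exact ⟨xh, xl, hr.1.some, hh, hl, fun a _ => ⟨(hfI a).1, (hfI a).2⟩⟩
      · subst h3
        refine ⟨A, A, r, r, xh, xl, fun p => (hr.2.2.2 p.1 p.2).choose, hr, hr, hh, hl, ?_⟩
        intro b c a ha
        have hspec := (hr.2.2.2 b c).choose_spec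
        have hba : r b a := hr.2.2.1 hspec.1 ha
        have hca : r c a := hr.2.2.1 hspec.2 ha
        exact ⟨le_trans (hh.1 b a hba) (hfI a).1, le_trans (hfI a).2 (hl.1 c a hca)⟩
    exact hx hxC
end

section
/- Let P be a distributive lattice satisfying the infinite distributive laws, (x_α)_{α∈A} and (y_β)_{β∈B} nets in P with x_α →^{o₁} x and y_β →^{o₁} y. Then the net (x_α ∧ y_β)_{(α,β)∈A×B} (with A×B ordered componentwise) o₁-converges to x ∧ y. -/
universe u v

theorem oConv1_inf {P : Type v} [DistribLattice P]
    (hd1 : ∀ (x : P) (M : Set P) (s : P), IsLUB M s → IsLUB ((fun m => x ⊓ m) '' M) (x ⊓ s))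
    (hd2 : ∀ (x : P) (M : Set P) (s : P), IsGLB M s → IsGLB ((fun m => x ⊔ m) '' M) (x ⊔ s))
    {A B : Type u} (rA : A → A → Prop) (rB : B → B → Prop)
    (hA : IsNetIndex rA) (hB : IsNetIndex rB)
    (f : A → P) (g : B → P) (x y : P) (hf : OConv1 rA f x) (hg : OConv1 rB g y) :
    OConv1 (fun p q : A × B => rA p.1 q.1 ∧ rB p.2 q.2)
      (fun p : A × B => f p.1 ⊓ g p.2) (x ⊓ y) := by
  obtain ⟨xh, xl, ⟨hxhm, hxhL⟩, ⟨hxlm, hxlG⟩, hxb⟩ := hf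
  obtain ⟨yh, yl, ⟨hyhm, hyhL⟩, ⟨hylm, hylG⟩, hyb⟩ := hg
  refine ⟨fun p => xh p.1 ⊓ yh p.2, fun p => xl p.1 ⊓ yl p.2, ⟨?_, ?_⟩, ⟨?_, ?_⟩, ?_⟩
  · exact fun p q h => inf_le_inf (hxhm _ _ h.1) (hyhm _ _ h.2)
  · constructor
    · rintro z ⟨p, rfl⟩
      exact inf_le_inf (hxhL.1 ⟨p.1, rfl⟩) (hyhL.1 ⟨p.2, rfl⟩)
    · intro u hu
      have h1 := hd1 y _ _ hxhL
      rw [inf_comm]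
      refine h1.2 ?_
      rintro z ⟨w, ⟨a, rfl⟩, rfl⟩
      have h2 := hd1 (xh a) _ _ hyhL
      show y ⊓ xh a ≤ u
      rw [inf_comm]
      refine h2.2 ?_
      rintro z ⟨w, ⟨b, rfl⟩, rfl⟩
      exact hu ⟨(a, b), rfl⟩
  · exact fun p q h => inf_le_inf (hxlm _ _ h.1) (hylm _ _ h.2)
  · constructor
    · rintro z ⟨p, rfl⟩
      exact inf_le_inf (hxlG.1 ⟨p.1, rfl⟩) (hylG.1 ⟨p.2, rfl⟩)
    · intro l hl
      obtain ⟨a0⟩ := hA.1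
      obtain ⟨b0⟩ := hB.1
      refine le_inf (hxlG.2 ?_) (hylG.2 ?_)
      · rintro z ⟨a, rfl⟩
        exact le_trans (hl ⟨(a, b0), rfl⟩) inf_le_left
      · rintro z ⟨b, rfl⟩
        exact le_trans (hl ⟨(a0, b), rfl⟩) inf_le_right
  · exact fun p => ⟨inf_le_inf (hxb p.1).1 (hyb p.2).1, inf_le_inf (hxb p.1).2 (hyb p.2).2⟩
end

section
/- Let P, Q be partially ordered sets, i ∈ {1,2,3}, and f : P → Q an o_i-continuous map. Then f is continuous with respect to the order topologies τ_o(P) and τ_o(Q). -/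
universe u v

lemma sandwich_oconv1 {P : Type v} [Preorder P] {A : Type u} {r : A → A → Prop}
    {g xh xl : A → P} {x : P} (hxh : IncrTo r xh x) (hxl : DecrTo r xl x)
    (hs : ∀ a, xh a ≤ g a ∧ g a ≤ xl a) : OConv1 r g x :=
  ⟨xh, xl, hxh, hxl, hs⟩

lemma sandwich_oconv2 {P : Type v} [Preorder P] {A : Type u} {r : A → A → Prop}
    {g xh xl : A → P} {x : P} (hr : IsNetIndex r) (hxh : IncrTo r xh x) (hxl : DecrTo r xl x)
    (hs : ∀ a, xh a ≤ g a ∧ g a ≤ xl a) : OConv2 r g x := by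
  obtain ⟨a₀⟩ := hr.1
  exact ⟨xh, xl, a₀, hxh, hxl, fun a _ => hs a⟩

lemma sandwich_oconv3 {P : Type v} [Preorder P] {A : Type u} {r : A → A → Prop}
    {g xh xl : A → P} {x : P} (hr : IsNetIndex r) (hxh : IncrTo r xh x) (hxl : DecrTo r xl x)
    (hs : ∀ a, xh a ≤ g a ∧ g a ≤ xl a) : OConv3 r g x := by
  obtain ⟨hne, hrefl, htrans, hdir⟩ := hr
  refine ⟨A, A, r, r, xh, xl, fun p => (hdir p.1 p.2).choose,
    ⟨hne, hrefl, htrans, hdir⟩, ⟨hne, hrefl, htrans, hdir⟩, hxh, hxl, ?_⟩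
  intro b c a ha
  obtain ⟨hb, hc⟩ := (hdir b c).choose_spec
  exact ⟨le_trans (hxh.1 b a (htrans hb ha)) (hs a).1,
    le_trans (hs a).2 (hxl.1 c a (htrans hc ha))⟩

theorem oCont_orderContinuous {P Q : Type u} [PartialOrder P] [PartialOrder Q] (i : ℕ)
    (hi : i ∈ ({1, 2, 3} : Set ℕ)) (f : P → Q) (h : OCont i f) :
    OrderContinuousMap f := by
  intro O hO x hx A r hr xh xl hxh hxl
  by_contra hcon
  push_neg at hcon
  choose g hg1 hg2 using fun a => Set.not_subset.mp (hcon a)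
  have hgO : ∀ a, f (g a) ∉ O := hg2
  have hsand : ∀ a, xh a ≤ g a ∧ g a ≤ xl a := fun a => ⟨(hg1 a).1, (hg1 a).2⟩
  have hnc : NetCatching O (f x) := hO (f x) hx
  have hconv : OConv i r g x := by
    rcases hi with h1 | h2 | h3
    · subst h1; exact sandwich_oconv1 hxh hxl hsand
    · subst h2; exact sandwich_oconv2 hr hxh hxl hsand
    · subst h3; exact sandwich_oconv3 hr hxh hxl hsand
  have hconv' := h A r hr g x hconv
  rcases hi with h1 | h2 | h3
  · subst h1
    obtain ⟨yh, yl, hyh, hyl, hs⟩ := hconv'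
    obtain ⟨a, ha⟩ := hnc A r hr yh yl hyh hyl
    exact hgO a (ha ⟨(hs a).1, (hs a).2⟩)
  · subst h2
    obtain ⟨yh, yl, a₀, hyh, hyl, hs⟩ := hconv'
    obtain ⟨a₁, ha₁⟩ := hnc A r hr yh yl hyh hyl
    obtain ⟨c, hc0, hc1⟩ := hr.2.2.2 a₀ a₁
    refine hgO c (ha₁ ⟨le_trans (hyh.1 a₁ c hc1) (hs c hc0).1,
      le_trans (hs c hc0).2 (hyl.1 a₁ c hc1)⟩)
  · subst h3
    obtain ⟨B, C, rB, rC, yh, yl, η, hB, hC, hyh, hyl, hs⟩ := hconv'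
    set rBC : B × C → B × C → Prop := fun p q => rB p.1 q.1 ∧ rC p.2 q.2 with hrBC
    have hBC : IsNetIndex rBC := by
      obtain ⟨⟨b⟩, hBr, hBt, hBd⟩ := hB
      obtain ⟨⟨c⟩, hCr, hCt, hCd⟩ := hC
      refine ⟨⟨(b, c)⟩, fun p => ⟨hBr p.1, hCr p.2⟩,
        fun p q s hpq hqs => ⟨hBt hpq.1 hqs.1, hCt hpq.2 hqs.2⟩, ?_⟩
      intro p q
      obtain ⟨b', hb1, hb2⟩ := hBd p.1 q.1
      obtain ⟨c', hc1, hc2⟩ := hCd p.2 q.2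
      exact ⟨(b', c'), ⟨hb1, hc1⟩, ⟨hb2, hc2⟩⟩
    have hyh' : IncrTo rBC (fun p => yh p.1) (f x) := by
      refine ⟨fun p q hpq => hyh.1 p.1 q.1 hpq.1, ?_⟩
      have : Set.range (fun p : B × C => yh p.1) = Set.range yh := by
        obtain ⟨⟨c⟩, _, _, _⟩ := hC
        ext y
        constructor
        · rintro ⟨p, rfl⟩; exact ⟨p.1, rfl⟩
        · rintro ⟨b, rfl⟩; exact ⟨(b, c), rfl⟩
      rw [this]; exact hyh.2
    have hyl' : DecrTo rBC (fun p => yl p.2) (f x) := by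
      refine ⟨fun p q hpq => hyl.1 p.2 q.2 hpq.2, ?_⟩
      have : Set.range (fun p : B × C => yl p.2) = Set.range yl := by
        obtain ⟨⟨b⟩, _, _, _⟩ := hB
        ext y
        constructor
        · rintro ⟨p, rfl⟩; exact ⟨p.2, rfl⟩
        · rintro ⟨c, rfl⟩; exact ⟨(b, c), rfl⟩
      rw [this]; exact hyl.2
    obtain ⟨⟨b, c⟩, hbc⟩ := hnc (B × C) rBC hBC _ _ hyh' hyl'
    have := hs b c (η (b, c)) (hr.2.1 _)
    exact hgO (η (b, c)) (hbc ⟨this.1, this.2⟩)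
end

section
/- Let P, Q be partially ordered sets, f : P → Q monotone, and i ∈ {1,2,3}. Then the following are equivalent: (i) f is o_i-continuous; (ii) f is continuous with respect to the order topologies; (iii) for every net (x_α) in P: x_α ↓ x implies inf{f(x_α)} exists and equals f(x), and x_α ↑ x implies sup{f(x_α)} exists and equals f(x). -/
universe u v

section Aux

variable {P Q : Type u} [Preorder P] [Preorder Q] {A : Type u} {r : A → A → Prop}

/-- Condition (iii) bundled. -/
def Cond3 {P Q : Type u} [Preorder P] [Preorder Q] (f : P → Q) : Prop :=
  ∀ (A : Type u) (r : A → A → Prop), IsNetIndex r → ∀ (g : A → P) (x : P),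
    (DecrTo r g x → IsGLB (Set.range (f ∘ g)) (f x)) ∧
    (IncrTo r g x → IsLUB (Set.range (f ∘ g)) (f x))

lemma aux_incr_const (hA : IsNetIndex r) (x : P) : IncrTo r (fun _ : A => x) x := by
  refine ⟨fun _ _ _ => le_refl x, ?_⟩
  haveI := hA.1
  rw [Set.range_const]
  exact isLUB_singleton

lemma aux_decr_const (hA : IsNetIndex r) (x : P) : DecrTo r (fun _ : A => x) x := by
  refine ⟨fun _ _ _ => le_refl x, ?_⟩
  haveI := hA.1
  rw [Set.range_const]
  exact isGLB_singleton

lemma aux_glb1 (hA : IsNetIndex r) {h : A → P} (hd : ∀ a b, r a b → h b ≤ h a)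
    {y : P} (hc : OConv1 r h y) : IsGLB (Set.range h) y := by
  obtain ⟨xh, xl, ⟨hhi, hhl⟩, ⟨hli, hlg⟩, hb⟩ := hc
  constructor
  · rintro q ⟨a, rfl⟩
    apply hhl.2
    rintro p ⟨c, rfl⟩
    obtain ⟨b, hcb, hab⟩ := hA.2.2.2 c a
    exact le_trans (hhi c b hcb) (le_trans (hb b).1 (hd a b hab))
  · intro z hz
    apply hlg.2
    rintro p ⟨a, rfl⟩
    exact le_trans (hz ⟨a, rfl⟩) (hb a).2

lemma aux_lub1 (hA : IsNetIndex r) {h : A → P} (hd : ∀ a b, r a b → h a ≤ h b)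
    {y : P} (hc : OConv1 r h y) : IsLUB (Set.range h) y := by
  obtain ⟨xh, xl, ⟨hhi, hhl⟩, ⟨hli, hlg⟩, hb⟩ := hc
  constructor
  · rintro q ⟨a, rfl⟩
    apply hlg.2
    rintro p ⟨c, rfl⟩
    obtain ⟨b, hcb, hab⟩ := hA.2.2.2 c a
    exact le_trans (hd a b hab) (le_trans (hb b).2 (hli c b hcb))
  · intro z hz
    apply hhl.2
    rintro p ⟨a, rfl⟩
    exact le_trans (hb a).1 (hz ⟨a, rfl⟩)

lemma aux_glb2 (hA : IsNetIndex r) {h : A → P} (hd : ∀ a b, r a b → h b ≤ h a)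
    {y : P} (hc : OConv2 r h y) : IsGLB (Set.range h) y := by
  obtain ⟨xh, xl, a₀, ⟨hhi, hhl⟩, ⟨hli, hlg⟩, hb⟩ := hc
  constructor
  · rintro q ⟨a, rfl⟩
    apply hhl.2
    rintro p ⟨c, rfl⟩
    obtain ⟨b, hcb, hab⟩ := hA.2.2.2 c a
    obtain ⟨b', hbb', ha₀b'⟩ := hA.2.2.2 b a₀
    exact le_trans (hhi c b' (hA.2.2.1 hcb hbb'))
      (le_trans (hb b' ha₀b').1 (hd a b' (hA.2.2.1 hab hbb')))
  · intro z hz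
    apply hlg.2
    rintro p ⟨c, rfl⟩
    obtain ⟨a, hca, ha₀a⟩ := hA.2.2.2 c a₀
    exact le_trans (le_trans (hz ⟨a, rfl⟩) (hb a ha₀a).2) (hli c a hca)

lemma aux_lub2 (hA : IsNetIndex r) {h : A → P} (hd : ∀ a b, r a b → h a ≤ h b)
    {y : P} (hc : OConv2 r h y) : IsLUB (Set.range h) y := by
  obtain ⟨xh, xl, a₀, ⟨hhi, hhl⟩, ⟨hli, hlg⟩, hb⟩ := hc
  constructor
  · rintro q ⟨a, rfl⟩
    apply hlg.2
    rintro p ⟨c, rfl⟩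
    obtain ⟨b, hcb, hab⟩ := hA.2.2.2 c a
    obtain ⟨b', hbb', ha₀b'⟩ := hA.2.2.2 b a₀
    exact le_trans (hd a b' (hA.2.2.1 hab hbb'))
      (le_trans (hb b' ha₀b').2 (hli c b' (hA.2.2.1 hcb hbb')))
  · intro z hz
    apply hhl.2
    rintro p ⟨c, rfl⟩
    obtain ⟨a, hca, ha₀a⟩ := hA.2.2.2 c a₀
    exact le_trans (hhi c a hca) (le_trans (hb a ha₀a).1 (hz ⟨a, rfl⟩))

lemma aux_glb3 (hA : IsNetIndex r) {h : A → P} (hd : ∀ a b, r a b → h b ≤ h a)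
    {y : P} (hc : OConv3 r h y) : IsGLB (Set.range h) y := by
  obtain ⟨B, C, rB, rC, xh, xl, η, hB, hC, ⟨hhi, hhl⟩, ⟨hli, hlg⟩, hb⟩ := hc
  constructor
  · rintro q ⟨a, rfl⟩
    apply hhl.2
    rintro p ⟨b, rfl⟩
    obtain ⟨c⟩ := hC.1
    obtain ⟨a', h1, h2⟩ := hA.2.2.2 (η (b, c)) a
    exact le_trans (hb b c a' h1).1 (hd a a' h2)
  · intro z hz
    apply hlg.2
    rintro p ⟨c, rfl⟩
    obtain ⟨b⟩ := hB.1
    exact le_trans (hz ⟨η (b, c), rfl⟩) (hb b c (η (b, c)) (hA.2.1 _)).2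

lemma aux_lub3 (hA : IsNetIndex r) {h : A → P} (hd : ∀ a b, r a b → h a ≤ h b)
    {y : P} (hc : OConv3 r h y) : IsLUB (Set.range h) y := by
  obtain ⟨B, C, rB, rC, xh, xl, η, hB, hC, ⟨hhi, hhl⟩, ⟨hli, hlg⟩, hb⟩ := hc
  constructor
  · rintro q ⟨a, rfl⟩
    apply hlg.2
    rintro p ⟨c, rfl⟩
    obtain ⟨b⟩ := hB.1
    obtain ⟨a', h1, h2⟩ := hA.2.2.2 (η (b, c)) a
    exact le_trans (hd a a' h2) (hb b c a' h1).2
  · intro z hz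
    apply hhl.2
    rintro p ⟨b, rfl⟩
    obtain ⟨c⟩ := hC.1
    exact le_trans (hb b c (η (b, c)) (hA.2.1 _)).1 (hz ⟨η (b, c), rfl⟩)

lemma aux_punit_net : IsNetIndex (fun _ _ : PUnit.{u + 1} => True) :=
  ⟨⟨PUnit.unit⟩, fun _ => trivial, fun _ _ _ _ _ => trivial, fun a _ => ⟨a, trivial, trivial⟩⟩

lemma decr_oconv1 (hA : IsNetIndex r) {g : A → P} {x : P} (hg : DecrTo r g x) :
    OConv1 r g x :=
  ⟨fun _ => x, g, aux_incr_const hA x, hg, fun a => ⟨hg.2.1 ⟨a, rfl⟩, le_refl _⟩⟩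

lemma decr_oconv2 (hA : IsNetIndex r) {g : A → P} {x : P} (hg : DecrTo r g x) :
    OConv2 r g x :=
  ⟨fun _ => x, g, Classical.choice hA.1, aux_incr_const hA x, hg,
    fun a _ => ⟨hg.2.1 ⟨a, rfl⟩, le_refl _⟩⟩

lemma decr_oconv3 (hA : IsNetIndex r) {g : A → P} {x : P} (hg : DecrTo r g x) :
    OConv3 r g x :=
  ⟨PUnit, A, (fun _ _ => True), r, (fun _ => x), g, (fun p => p.2),
    aux_punit_net, hA, aux_incr_const aux_punit_net x, hg,
    fun _ c a hca => ⟨hg.2.1 ⟨a, rfl⟩, hg.1 c a hca⟩⟩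

lemma incr_oconv1 (hA : IsNetIndex r) {g : A → P} {x : P} (hg : IncrTo r g x) :
    OConv1 r g x :=
  ⟨g, fun _ => x, hg, aux_decr_const hA x, fun a => ⟨le_refl _, hg.2.1 ⟨a, rfl⟩⟩⟩

lemma incr_oconv2 (hA : IsNetIndex r) {g : A → P} {x : P} (hg : IncrTo r g x) :
    OConv2 r g x :=
  ⟨g, fun _ => x, Classical.choice hA.1, hg, aux_decr_const hA x,
    fun a _ => ⟨le_refl _, hg.2.1 ⟨a, rfl⟩⟩⟩

lemma incr_oconv3 (hA : IsNetIndex r) {g : A → P} {x : P} (hg : IncrTo r g x) :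
    OConv3 r g x :=
  ⟨A, PUnit, r, (fun _ _ => True), g, (fun _ => x), (fun p => p.1),
    hA, aux_punit_net, hg, aux_decr_const aux_punit_net x,
    fun b _ a hba => ⟨hg.1 b a hba, hg.2.1 ⟨a, rfl⟩⟩⟩

lemma oconv_of_decrTo (i : ℕ) (hA : IsNetIndex r) {g : A → P} {x : P}
    (hg : DecrTo r g x) : OConv i r g x := by
  match i with
  | 1 => exact decr_oconv1 hA hg
  | 2 => exact decr_oconv2 hA hg
  | 0 => exact decr_oconv3 hA hg
  | (n + 3) => exact decr_oconv3 hA hg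

lemma oconv_of_incrTo (i : ℕ) (hA : IsNetIndex r) {g : A → P} {x : P}
    (hg : IncrTo r g x) : OConv i r g x := by
  match i with
  | 1 => exact incr_oconv1 hA hg
  | 2 => exact incr_oconv2 hA hg
  | 0 => exact incr_oconv3 hA hg
  | (n + 3) => exact incr_oconv3 hA hg

lemma isGLB_of_oconv_anti (i : ℕ) (hA : IsNetIndex r) {h : A → P}
    (hd : ∀ a b, r a b → h b ≤ h a) {y : P} (hc : OConv i r h y) :
    IsGLB (Set.range h) y := by
  match i with
  | 1 => exact aux_glb1 hA hd hc
  | 2 => exact aux_glb2 hA hd hc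
  | 0 => exact aux_glb3 hA hd hc
  | (n + 3) => exact aux_glb3 hA hd hc

lemma isLUB_of_oconv_mono (i : ℕ) (hA : IsNetIndex r) {h : A → P}
    (hd : ∀ a b, r a b → h a ≤ h b) {y : P} (hc : OConv i r h y) :
    IsLUB (Set.range h) y := by
  match i with
  | 1 => exact aux_lub1 hA hd hc
  | 2 => exact aux_lub2 hA hd hc
  | 0 => exact aux_lub3 hA hd hc
  | (n + 3) => exact aux_lub3 hA hd hc

lemma ocont_cond3 (i : ℕ) {f : P → Q} (hm : Monotone f) (hf : OCont i f) : Cond3 f := by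
  intro A r hA g x
  constructor
  · intro hg
    exact isGLB_of_oconv_anti i hA (fun a b hab => hm (hg.1 a b hab))
      (hf A r hA g x (oconv_of_decrTo i hA hg))
  · intro hg
    exact isLUB_of_oconv_mono i hA (fun a b hab => hm (hg.1 a b hab))
      (hf A r hA g x (oconv_of_incrTo i hA hg))

lemma cond3_ocont (i : ℕ) {f : P → Q} (hm : Monotone f) (h3 : Cond3 f) : OCont i f := by
  intro A r hA g x hg
  match i with
  | 1 =>
    obtain ⟨xh, xl, hxh, hxl, hb⟩ := hg
    exact ⟨f ∘ xh, f ∘ xl,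
      ⟨fun a b hab => hm (hxh.1 a b hab), (h3 A r hA xh x).2 hxh⟩,
      ⟨fun a b hab => hm (hxl.1 a b hab), (h3 A r hA xl x).1 hxl⟩,
      fun a => ⟨hm (hb a).1, hm (hb a).2⟩⟩
  | 2 =>
    obtain ⟨xh, xl, a₀, hxh, hxl, hb⟩ := hg
    exact ⟨f ∘ xh, f ∘ xl, a₀,
      ⟨fun a b hab => hm (hxh.1 a b hab), (h3 A r hA xh x).2 hxh⟩,
      ⟨fun a b hab => hm (hxl.1 a b hab), (h3 A r hA xl x).1 hxl⟩,
      fun a ha => ⟨hm (hb a ha).1, hm (hb a ha).2⟩⟩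
  | 0 =>
    obtain ⟨B, C, rB, rC, xh, xl, η, hB, hC, hxh, hxl, hb⟩ := hg
    exact ⟨B, C, rB, rC, f ∘ xh, f ∘ xl, η, hB, hC,
      ⟨fun a b hab => hm (hxh.1 a b hab), (h3 B rB hB xh x).2 hxh⟩,
      ⟨fun a b hab => hm (hxl.1 a b hab), (h3 C rC hC xl x).1 hxl⟩,
      fun b c a ha => ⟨hm (hb b c a ha).1, hm (hb b c a ha).2⟩⟩
  | (n + 3) =>
    obtain ⟨B, C, rB, rC, xh, xl, η, hB, hC, hxh, hxl, hb⟩ := hg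
    exact ⟨B, C, rB, rC, f ∘ xh, f ∘ xl, η, hB, hC,
      ⟨fun a b hab => hm (hxh.1 a b hab), (h3 B rB hB xh x).2 hxh⟩,
      ⟨fun a b hab => hm (hxl.1 a b hab), (h3 C rC hC xl x).1 hxl⟩,
      fun b c a ha => ⟨hm (hb b c a ha).1, hm (hb b c a ha).2⟩⟩

lemma cond3_ocm {f : P → Q} (hm : Monotone f) (h3 : Cond3 f) : OrderContinuousMap f := by
  intro O hO x hx A r hA xh xl hxh hxl
  obtain ⟨a, ha⟩ := hO (f x) hx A r hA (f ∘ xh) (f ∘ xl)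
    ⟨fun a b hab => hm (hxh.1 a b hab), (h3 A r hA xh x).2 hxh⟩
    ⟨fun a b hab => hm (hxl.1 a b hab), (h3 A r hA xl x).1 hxl⟩
  exact ⟨a, fun p hp => ha ⟨hm hp.1, hm hp.2⟩⟩

lemma ocm_cond3 {f : P → Q} (hm : Monotone f) (hocm : OrderContinuousMap f) : Cond3 f := by
  intro A r hA g x
  constructor
  · intro hg
    constructor
    · rintro q ⟨a, rfl⟩
      exact hm (hg.2.1 ⟨a, rfl⟩)
    · intro z hz
      by_contra hzx
      have hU : OrderOpen {q : Q | ¬ z ≤ q} := by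
        intro y hy A' r' hA' xh' xl' hxh' hxl'
        by_contra hcon
        push_neg at hcon
        apply hy
        apply hxl'.2.2
        rintro p ⟨a, rfl⟩
        obtain ⟨q, hq1, hq2⟩ := Set.not_subset.mp (hcon a)
        exact le_trans (not_not.mp hq2) hq1.2
      obtain ⟨a, ha⟩ := hocm _ hU x hzx A r hA (fun _ => x) g (aux_incr_const hA x) hg
      exact ha ⟨hg.2.1 ⟨a, rfl⟩, le_refl _⟩ (hz ⟨a, rfl⟩)
  · intro hg
    constructor
    · rintro q ⟨a, rfl⟩
      exact hm (hg.2.1 ⟨a, rfl⟩)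
    · intro z hz
      by_contra hzx
      have hU : OrderOpen {q : Q | ¬ q ≤ z} := by
        intro y hy A' r' hA' xh' xl' hxh' hxl'
        by_contra hcon
        push_neg at hcon
        apply hy
        apply hxh'.2.2
        rintro p ⟨a, rfl⟩
        obtain ⟨q, hq1, hq2⟩ := Set.not_subset.mp (hcon a)
        exact le_trans hq1.1 (not_not.mp hq2)
      obtain ⟨a, ha⟩ := hocm _ hU x hzx A r hA g (fun _ => x) hg (aux_decr_const hA x)
      exact ha ⟨le_refl _, hg.2.1 ⟨a, rfl⟩⟩ (hz ⟨a, rfl⟩)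

end Aux

theorem monotone_oCont_tfae {P Q : Type u} [PartialOrder P] [PartialOrder Q] (i : ℕ)
    (hi : i ∈ ({1, 2, 3} : Set ℕ)) (f : P → Q) (hmono : Monotone f) :
    (OCont i f ↔ OrderContinuousMap f) ∧
    (OCont i f ↔
      ∀ (A : Type u) (r : A → A → Prop), IsNetIndex r → ∀ (g : A → P) (x : P),
        (DecrTo r g x → IsGLB (Set.range (f ∘ g)) (f x)) ∧
        (IncrTo r g x → IsLUB (Set.range (f ∘ g)) (f x))) := by
  exact ⟨⟨fun h => cond3_ocm hmono (ocont_cond3 i hmono h),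
      fun h => cond3_ocont i hmono (ocm_cond3 hmono h)⟩,
    ⟨fun h => ocont_cond3 i hmono h, fun h => cond3_ocont i hmono h⟩⟩
end

section
/- Let P, Q be partially ordered sets and f : P → Q an order embedding such that f[P] is order dense in Q. Then f is order continuous (continuous with respect to the order topologies) and o_i-continuous for each i ∈ {1,2,3}. -/
universe u v

lemma aux_lub_map {P Q : Type u} [PartialOrder P] [PartialOrder Q]
    (f : P ↪o Q) (hd : OrderDense (Set.range f)) {S : Set P} {x : P} (h : IsLUB S x) :
    IsLUB (f '' S) (f x) := by
  constructor
  · rintro _ ⟨s, hs, rfl⟩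
    exact f.monotone (h.1 hs)
  · rintro q hq
    refine (hd q).2.2 ?_
    rintro m ⟨⟨p, rfl⟩, hqm⟩
    refine f.le_iff_le.mpr (h.2 ?_)
    intro s hs
    exact f.le_iff_le.mp (le_trans (hq ⟨s, hs, rfl⟩) hqm)

lemma aux_glb_map {P Q : Type u} [PartialOrder P] [PartialOrder Q]
    (f : P ↪o Q) (hd : OrderDense (Set.range f)) {S : Set P} {x : P} (h : IsGLB S x) :
    IsGLB (f '' S) (f x) := by
  constructor
  · rintro _ ⟨s, hs, rfl⟩
    exact f.monotone (h.1 hs)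
  · rintro q hq
    refine (hd q).1.2 ?_
    rintro m ⟨⟨p, rfl⟩, hqm⟩
    refine f.le_iff_le.mpr (h.2 ?_)
    intro s hs
    exact f.le_iff_le.mp (le_trans hqm (hq ⟨s, hs, rfl⟩))

lemma aux_incr_map {P Q : Type u} [PartialOrder P] [PartialOrder Q]
    (f : P ↪o Q) (hd : OrderDense (Set.range f)) {A : Type u} {r : A → A → Prop}
    {g : A → P} {x : P} (h : IncrTo r g x) : IncrTo r (⇑f ∘ g) (f x) := by
  refine ⟨fun a b hab => f.monotone (h.1 a b hab), ?_⟩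
  rw [Set.range_comp]
  exact aux_lub_map f hd h.2

lemma aux_decr_map {P Q : Type u} [PartialOrder P] [PartialOrder Q]
    (f : P ↪o Q) (hd : OrderDense (Set.range f)) {A : Type u} {r : A → A → Prop}
    {g : A → P} {x : P} (h : DecrTo r g x) : DecrTo r (⇑f ∘ g) (f x) := by
  refine ⟨fun a b hab => f.monotone (h.1 a b hab), ?_⟩
  rw [Set.range_comp]
  exact aux_glb_map f hd h.2

theorem orderEmbedding_orderDense_continuous {P Q : Type u} [PartialOrder P] [PartialOrder Q]
    (f : P ↪o Q) (hd : OrderDense (Set.range f)) :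
    OrderContinuousMap (⇑f : P → Q) ∧ ∀ i ∈ ({1, 2, 3} : Set ℕ), OCont i (⇑f : P → Q) := by
  constructor
  · intro O hO x hx A r hA xh xl hxh hxl
    obtain ⟨a, ha⟩ := hO (f x) hx A r hA (⇑f ∘ xh) (⇑f ∘ xl)
      (aux_incr_map f hd hxh) (aux_decr_map f hd hxl)
    refine ⟨a, fun p hp => ?_⟩
    exact ha ⟨f.monotone hp.1, f.monotone hp.2⟩
  · intro i hi A r hA g x hconv
    have h1 : i = 1 ∨ i = 2 ∨ i = 3 := hi
    rcases h1 with rfl | rfl | rfl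
    · obtain ⟨xh, xl, h1, h2, h3⟩ := hconv
      exact ⟨⇑f ∘ xh, ⇑f ∘ xl, aux_incr_map f hd h1, aux_decr_map f hd h2,
        fun a => ⟨f.monotone (h3 a).1, f.monotone (h3 a).2⟩⟩
    · obtain ⟨xh, xl, a₀, h1, h2, h3⟩ := hconv
      exact ⟨⇑f ∘ xh, ⇑f ∘ xl, a₀, aux_incr_map f hd h1, aux_decr_map f hd h2,
        fun a ha => ⟨f.monotone (h3 a ha).1, f.monotone (h3 a ha).2⟩⟩
    · obtain ⟨B, C, rB, rC, xh, xl, η, hB, hC, h1, h2, h3⟩ := hconv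
      exact ⟨B, C, rB, rC, ⇑f ∘ xh, ⇑f ∘ xl, η, hB, hC,
        aux_incr_map f hd h1, aux_decr_map f hd h2,
        fun b c a ha => ⟨f.monotone (h3 b c a ha).1, f.monotone (h3 b c a ha).2⟩⟩
end

section
/- Let P, Q be partially ordered sets. Every o₁-continuous map f : P → Q is order bounded, i.e., maps order intervals into order bounded sets. -/
universe u v

theorem oCont1_orderBounded {P Q : Type u} [PartialOrder P] [PartialOrder Q] (f : P → Q)
    (h : OCont 1 f) :
    ∀ S : Set P, (∃ a b : P, S ⊆ Set.Icc a b) → ∃ c d : Q, f '' S ⊆ Set.Icc c d := by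
  classical
  intro S hS
  obtain ⟨a, b, hab⟩ := hS
  rcases S.eq_empty_or_nonempty with hSe | ⟨s0, hs0⟩
  · exact ⟨f a, f a, by simp [hSe]⟩
  have hab' : a ≤ b := le_trans (hab hs0).1 (hab hs0).2
  let A := (↥S) ⊕ ULift.{u} Bool
  let bot : A := Sum.inr ⟨false⟩
  let top : A := Sum.inr ⟨true⟩
  have hbt : bot ≠ top := by
    intro hc
    simp only [bot, top] at hc
    exact Bool.false_ne_true (congrArg ULift.down (Sum.inr.inj hc))
  let r : A → A → Prop := fun i j => i = j ∨ i = bot ∨ j = top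
  have hnet : IsNetIndex r := by
    refine ⟨⟨top⟩, fun i => Or.inl rfl, ?_, fun i j => ⟨top, Or.inr (Or.inr rfl),
      Or.inr (Or.inr rfl)⟩⟩
    rintro i j k (rfl | hib | rfl) hjk
    · exact hjk
    · exact Or.inr (Or.inl hib)
    · rcases hjk with rfl | hb | ht
      · exact Or.inr (Or.inr rfl)
      · exact absurd hb.symm hbt
      · exact Or.inr (Or.inr ht)
  let g : A → P := Sum.elim (fun s => (s : P)) (fun _ => a)
  let xl : A → P := fun i => if i = top then a else b
  have hxl_top : xl top = a := if_pos rfl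
  have hxl_le : ∀ i, a ≤ xl i := by
    intro i
    by_cases hi : i = top
    · simp [xl, hi]
    · simp [xl, hi, hab']
  have hconv : OConv1 r g a := by
    refine ⟨fun _ => a, xl, ⟨fun _ _ _ => le_refl a, ?_⟩, ⟨?_, ?_⟩, ?_⟩
    · have : Set.range (fun _ : A => a) = {a} := Set.range_const
      rw [this]; exact isLUB_singleton
    · rintro i j (rfl | hib | hjt)
      · exact le_refl _
      · have : xl i = b := by
          rw [hib]
          exact if_neg hbt
        rw [this]
        by_cases hj : j = top
        · simp [xl, hj, hab']
        · simp [xl, hj]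
      · rw [hjt, hxl_top]; exact hxl_le i
    · constructor
      · rintro y ⟨i, rfl⟩; exact hxl_le i
      · intro q hq
        exact hxl_top ▸ hq ⟨top, rfl⟩
    · rintro (s | u)
      · refine ⟨(hab s.2).1, ?_⟩
        have : xl (Sum.inl s) = b := if_neg (by simp [top])
        rw [this]; exact (hab s.2).2
      · refine ⟨le_refl _, hxl_le _⟩
  obtain ⟨yh, yl, ⟨hyhm, _⟩, ⟨hylm, _⟩, hsand⟩ := h A r hnet g a hconv
  refine ⟨yh bot, yl bot, ?_⟩
  rintro y ⟨s, hs, rfl⟩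
  have hr : r bot (Sum.inl ⟨s, hs⟩) := Or.inr (Or.inl rfl)
  have h1 := hyhm bot (Sum.inl ⟨s, hs⟩) hr
  have h2 := hylm bot (Sum.inl ⟨s, hs⟩) hr
  exact ⟨le_trans h1 (hsand (Sum.inl ⟨s, hs⟩)).1,
    le_trans (hsand (Sum.inl ⟨s, hs⟩)).2 h2⟩
end

section
/- Let X be a partially ordered vector space and i ∈ {1,2,3}. Then the following are equivalent: (i) X is Archimedean and directed; (ii) for every net (λ_α)_{α∈A} in ℝ with λ_α →^{o_i} λ and every net (x_β)_{β∈B} in X with x_β →^{o_i} x, the net (λ_α x_β)_{(α,β)∈A×B} (componentwise order on A×B) satisfies λ_α x_β →^{o_i} λx. -/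
universe u v

/-!
Sandwich the two nets as `p ≤ l ≤ q` and `u ≤ g ≤ v`, and write `x = a - b` with `a, b ≥ 0`, so
that `-c ≤ x ≤ c` for `c = a + b`. With the widths `ε = q - p ↓ 0` and `k = v - u ↓ 0`,
`s • y - lam • x = (s - lam) • (y - x) + lam • (y - x) + (s - lam) • x` lies between `±D` for
`D = ε • k + |lam| • k + ε • c` whenever `s` and `y` lie between the bounds, and `D ↓ 0`; only the
term `ε • c` needs the Archimedean property. For o₃ both bounds are first re-indexed over one
common index set.

Conversely, `(n + 1)⁻¹ • y → 0` for every `y`, so there is a nonempty family with infimum `0`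
each member `w` of which lies above some `(n + 1)⁻¹ • y`. An `x` with `n • x ≤ y` for all `n`
lies below the whole family, hence `x ≤ 0`; and a single member `w ≥ 0` gives
`y ≤ (n + 1) • w = a`, so `y = a - (a - y)` with `a, a - y ≥ 0`.
-/

open Set

def ProdRel {A B : Type*} (rA : A → A → Prop) (rB : B → B → Prop) (p q : A × B) :
    Prop :=
  rA p.1 q.1 ∧ rB p.2 q.2

namespace IsNetIndex

variable {A B : Type u} {rA : A → A → Prop} {rB : B → B → Prop}

theorem prod (hA : IsNetIndex rA) (hB : IsNetIndex rB) : IsNetIndex (ProdRel rA rB) := by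
  obtain ⟨⟨a⟩, hreflA, htransA, hdirA⟩ := hA
  obtain ⟨⟨b⟩, hreflB, htransB, hdirB⟩ := hB
  refine ⟨⟨(a, b)⟩, fun p => ⟨hreflA _, hreflB _⟩,
    fun p q s hpq hqs => ⟨htransA hpq.1 hqs.1, htransB hpq.2 hqs.2⟩, fun p q => ?_⟩
  obtain ⟨c, hpc, hqc⟩ := hdirA p.1 q.1
  obtain ⟨d, hpd, hqd⟩ := hdirB p.2 q.2
  exact ⟨(c, d), ⟨hpc, hpd⟩, ⟨hqc, hqd⟩⟩

theorem of_directedOrder {A : Type u} [Preorder A] [Nonempty A] [IsDirectedOrder A] :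
    IsNetIndex (A := A) (· ≤ ·) :=
  ⟨‹_›, fun _ => le_rfl, fun _ _ _ => le_trans, directed_of (· ≤ ·)⟩

end IsNetIndex

section Preorder

variable {P : Type v} [Preorder P] {A B : Type u} {r : A → A → Prop} {rB : B → B → Prop}
  {f : A → P} {x : P}

theorem incrTo_const [Nonempty A] (x : P) : IncrTo r (fun _ => x) x :=
  ⟨fun _ _ _ => le_rfl, by simpa only [range_const] using isLUB_singleton⟩

theorem decrTo_const [Nonempty A] (x : P) : DecrTo r (fun _ => x) x :=
  ⟨fun _ _ _ => le_rfl, by simpa only [range_const] using isGLB_singleton⟩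

theorem DecrTo.comp_fst [Nonempty B] (h : DecrTo r f x) :
    DecrTo (ProdRel r rB) (f ∘ Prod.fst) x :=
  ⟨fun _ _ hpq => h.1 _ _ hpq.1, by rw [Prod.fst_surjective.range_comp]; exact h.2⟩

theorem IncrTo.comp_fst [Nonempty B] (h : IncrTo r f x) :
    IncrTo (ProdRel r rB) (f ∘ Prod.fst) x :=
  DecrTo.comp_fst (P := Pᵒᵈ) h

theorem DecrTo.comp_snd {g : B → P} [Nonempty A] (h : DecrTo rB g x) :
    DecrTo (ProdRel r rB) (g ∘ Prod.snd) x :=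
  ⟨fun _ _ hpq => h.1 _ _ hpq.2, by rw [Prod.snd_surjective.range_comp]; exact h.2⟩

end Preorder

section OrderedGroup

variable {G : Type v} [AddCommGroup G] [PartialOrder G] [IsOrderedAddMonoid G]
  {A : Type u} {r : A → A → Prop} {f g : A → G} {a b : G}

theorem DecrTo.add (hr : IsNetIndex r) (hf : DecrTo r f a) (hg : DecrTo r g b) :
    DecrTo r (f + g) (a + b) := by
  refine ⟨fun i j hij => add_le_add (hf.1 i j hij) (hg.1 i j hij), ?_, fun z hz => ?_⟩
  · rintro _ ⟨i, rfl⟩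
    exact add_le_add (hf.2.1 ⟨i, rfl⟩) (hg.2.1 ⟨i, rfl⟩)
  · refine (hf.2.add hg.2).2 ?_
    rintro _ ⟨_, ⟨i, rfl⟩, _, ⟨j, rfl⟩, rfl⟩
    obtain ⟨k, hik, hjk⟩ := hr.2.2.2 i j
    exact (hz ⟨k, rfl⟩).trans (add_le_add (hf.1 i k hik) (hg.1 j k hjk))

theorem DecrTo.sub_incrTo (hr : IsNetIndex r) (hf : DecrTo r f a) (hg : IncrTo r g b) :
    DecrTo r (f - g) (a - b) := by
  refine ⟨fun i j hij => sub_le_sub (hf.1 i j hij) (hg.1 i j hij), ?_, fun z hz => ?_⟩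
  · rintro _ ⟨i, rfl⟩
    exact sub_le_sub (hf.2.1 ⟨i, rfl⟩) (hg.2.1 ⟨i, rfl⟩)
  · refine (hf.2.sub hg.2).2 ?_
    rintro _ ⟨_, ⟨i, rfl⟩, _, ⟨j, rfl⟩, rfl⟩
    obtain ⟨k, hik, hjk⟩ := hr.2.2.2 i j
    exact (hz ⟨k, rfl⟩).trans (sub_le_sub (hf.1 i k hik) (hg.1 j k hjk))

theorem IncrTo.sub_decrTo (hr : IsNetIndex r) (hf : IncrTo r f a) (hg : DecrTo r g b) :
    IncrTo r (f - g) (a - b) :=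
  DecrTo.sub_incrTo (G := Gᵒᵈ) hr hf hg

theorem sub_mem_Icc_neg_of_mem_Icc {s t : G} (hs : s ∈ Icc a b) (ht : t ∈ Icc a b) :
    s - t ∈ Icc (-(b - a)) (b - a) := by
  rw [neg_sub]
  exact ⟨sub_le_sub hs.1 ht.2, sub_le_sub hs.2 ht.1⟩

theorem sub_mem_Icc_neg_add (ha : 0 ≤ a) (hb : 0 ≤ b) : a - b ∈ Icc (-(a + b)) (a + b) := by
  constructor
  · calc -(a + b) = a - b - (a + a) := by abel
      _ ≤ a - b := sub_le_self _ (add_nonneg ha ha)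
  · calc a - b ≤ a - b + (b + b) := le_add_of_nonneg_right (add_nonneg hb hb)
      _ = a + b := by abel

theorem exists_nonneg_sub_eq_of_le {y w : G} (hw : 0 ≤ w) (hyw : y ≤ w) :
    ∃ a b : G, 0 ≤ a ∧ 0 ≤ b ∧ y = a - b :=
  ⟨w, w - y, hw, sub_nonneg.2 hyw, (sub_sub_cancel w y).symm⟩

end OrderedGroup

section OrderConvergence

variable {P : Type v} [Preorder P] {A : Type u} {r : A → A → Prop} {f : A → P} {x : P}

theorem oConv1_const (hr : IsNetIndex r) (x : P) : OConv1 r (fun _ => x) x :=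
  have := hr.1
  ⟨_, _, incrTo_const x, decrTo_const x, fun _ => ⟨le_rfl, le_rfl⟩⟩

theorem oConv1_inv_nat_add_one :
    OConv1 (A := ULift.{u} ℕ) (· ≤ ·) (fun n => ((n.down : ℝ) + 1)⁻¹) 0 := by
  have hanti : Antitone fun n : ℕ => ((n : ℝ) + 1)⁻¹ := fun m n hmn => by
    dsimp only
    gcongr
  have hglb : IsGLB (range fun n : ℕ => ((n : ℝ) + 1)⁻¹) 0 :=
    isGLB_of_tendsto_atTop hanti <| by
      simpa only [one_div] using tendsto_one_div_add_atTop_nhds_zero_nat (𝕜 := ℝ)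
  refine ⟨_, _, incrTo_const 0, ⟨fun m n hmn => hanti hmn, ?_⟩, fun n => ⟨by positivity, le_rfl⟩⟩
  rwa [← ULift.down_surjective.range_comp] at hglb

theorem OConv3.exists_common_index (h : OConv3 r f x) :
    ∃ (E : Type u) (rE : E → E → Prop) (xh xl : E → P) (η : E → A), IsNetIndex rE ∧
      IncrTo rE xh x ∧ DecrTo rE xl x ∧ ∀ e a, r (η e) a → f a ∈ Icc (xh e) (xl e) := by
  obtain ⟨B, C, rB, rC, xh, xl, η, hB, hC, hxh, hxl, hsand⟩ := h
  have := hB.1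
  have := hC.1
  exact ⟨B × C, ProdRel rB rC, xh ∘ Prod.fst, xl ∘ Prod.snd, η, hB.prod hC, hxh.comp_fst,
    hxl.comp_snd, fun e a => hsand e.1 e.2 a⟩

theorem OConv3.of_common_index (hr : IsNetIndex r) {E : Type u} {rE : E → E → Prop}
    {xh xl : E → P} {η : E → A} (hE : IsNetIndex rE) (hxh : IncrTo rE xh x)
    (hxl : DecrTo rE xl x) (hsand : ∀ e a, r (η e) a → f a ∈ Icc (xh e) (xl e)) :
    OConv3 r f x := by
  choose η' hη' using fun bc : E × E => hr.2.2.2 (η bc.1) (η bc.2)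
  exact ⟨E, E, rE, rE, xh, xl, η', hE, hE, hxh, hxl, fun b c a ha =>
    ⟨(hsand b a (hr.2.2.1 (hη' (b, c)).1 ha)).1, (hsand c a (hr.2.2.1 (hη' (b, c)).2 ha)).2⟩⟩

theorem OConv1.oConv (hr : IsNetIndex r) (h : OConv1 r f x) : ∀ i, OConv i r f x := by
  obtain ⟨xh, xl, hxh, hxl, hsand⟩ := h
  have hsand₃ : ∀ e a, r (id e) a → f a ∈ Icc (xh e) (xl e) := fun e a hea =>
    ⟨(hxh.1 e a hea).trans (hsand a).1, (hsand a).2.trans (hxl.1 e a hea)⟩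
  intro i
  rcases i with _ | _ | _ | i
  exacts [OConv3.of_common_index hr hr hxh hxl hsand₃, ⟨xh, xl, hxh, hxl, hsand⟩,
    ⟨xh, xl, hr.1.some, hxh, hxl, fun a _ => hsand a⟩, OConv3.of_common_index hr hr hxh hxl hsand₃]

theorem OConv.exists_isGLB_dominating (hr : IsNetIndex r) :
    ∀ i, OConv i r f x →
      ∃ (C : Type u) (w : C → P), Nonempty C ∧ IsGLB (range w) x ∧ ∀ c, ∃ a, f a ≤ w c := by
  have of_oConv3 (h : OConv3 r f x) :
      ∃ (C : Type u) (w : C → P), Nonempty C ∧ IsGLB (range w) x ∧ ∀ c, ∃ a, f a ≤ w c := by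
    obtain ⟨E, rE, xh, xl, η, hE, -, hxl, hsand⟩ := h.exists_common_index
    exact ⟨E, xl, hE.1, hxl.2, fun e => ⟨η e, (hsand e _ (hr.2.1 _)).2⟩⟩
  rintro (_ | _ | _ | i) h
  · exact of_oConv3 h
  · obtain ⟨xh, xl, hxh, hxl, hsand⟩ := h
    exact ⟨A, xl, hr.1, hxl.2, fun a => ⟨a, (hsand a).2⟩⟩
  · obtain ⟨xh, xl, a₀, hxh, hxl, hsand⟩ := h
    refine ⟨A, xl, hr.1, hxl.2, fun a => ?_⟩
    obtain ⟨d, had, ha₀d⟩ := hr.2.2.2 a a₀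
    exact ⟨d, (hsand d ha₀d).2.trans (hxl.1 a d had)⟩
  · exact of_oConv3 h

end OrderConvergence

section OrderedVectorSpace

variable {X : Type v} [AddCommGroup X] [PartialOrder X] [IsOrderedAddMonoid X] [Module ℝ X]
  [PosSMulMono ℝ X] {A : Type u} {r : A → A → Prop} {e : A → ℝ} {k : A → X} {c : X}

theorem DecrTo.smul_const (harch : ∀ x y : X, (∀ n : ℕ, n • x ≤ y) → x ≤ 0)
    (he : DecrTo r e 0) (hc : 0 ≤ c) : DecrTo r (fun a => e a • c) 0 := by
  have he0 : ∀ a, 0 ≤ e a := fun a => he.2.1 ⟨a, rfl⟩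
  refine ⟨fun a b hab => smul_le_smul_of_nonneg_right (he.1 a b hab) hc, ?_,
    fun z hz => harch z c fun n => ?_⟩
  · rintro _ ⟨a, rfl⟩
    exact smul_nonneg (he0 a) hc
  · have hn : (0 : ℝ) < n + 1 := n.cast_add_one_pos
    obtain ⟨_, ⟨a, rfl⟩, -, hea⟩ := he.2.exists_between (inv_pos.2 hn)
    have hnea : (n : ℝ) * e a ≤ 1 := by
      have := mul_lt_mul_of_pos_left hea hn
      rw [mul_inv_cancel₀ hn.ne'] at this
      nlinarith [he0 a]
    calc n • z = (n : ℝ) • z := (Nat.cast_smul_eq_nsmul ℝ n z).symm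
      _ ≤ (n : ℝ) • e a • c := smul_le_smul_of_nonneg_left (hz ⟨a, rfl⟩) n.cast_nonneg
      _ = ((n : ℝ) * e a) • c := smul_smul _ _ _
      _ ≤ (1 : ℝ) • c := smul_le_smul_of_nonneg_right hnea hc
      _ = c := one_smul ℝ c

theorem DecrTo.smul (hr : IsNetIndex r) {μ : ℝ} (he : DecrTo r e μ) (hμ : 0 ≤ μ)
    (hk : DecrTo r k 0) : DecrTo r (fun a => e a • k a) 0 := by
  have he0 : ∀ a, 0 ≤ e a := fun a => hμ.trans (he.2.1 ⟨a, rfl⟩)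
  have hk0 : ∀ a, 0 ≤ k a := fun a => hk.2.1 ⟨a, rfl⟩
  have hmono : ∀ a b a' b', r a a' → r b b' → e a' • k b' ≤ e a • k b := fun a b a' b' ha hb =>
    smul_le_smul (he.1 a a' ha) (hk.1 b b' hb) (he0 a') (hk0 b)
  refine ⟨fun a b hab => hmono a a b b hab hab, ?_, fun z hz => ?_⟩
  · rintro _ ⟨a, rfl⟩
    exact smul_nonneg (he0 a) (hk0 a)
  obtain ⟨a⟩ := hr.1
  have hza : ∀ b, z ≤ e a • k b := fun b => by
    obtain ⟨d, had, hbd⟩ := hr.2.2.2 a b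
    exact (hz ⟨d, rfl⟩).trans (hmono a b d d had hbd)
  rcases (he0 a).eq_or_lt with hea | hea
  · simpa [← hea] using hza a
  · have : (e a)⁻¹ • z ≤ 0 := hk.2.2 <| by
      rintro _ ⟨b, rfl⟩
      exact (inv_smul_le_iff_of_pos hea).2 (hza b)
    simpa using (inv_smul_le_iff_of_pos hea).1 this

theorem smul_mem_Icc_neg_of_abs_le {t ε : ℝ} {h k : X} (ht : |t| ≤ ε) (hh : h ∈ Icc (-k) k) :
    t • h ∈ Icc (-(ε • k)) (ε • k) := by
  obtain ⟨ht₁, ht₂⟩ := abs_le.1 ht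
  have hle : ∀ h ∈ Icc (-k) k, t • h ≤ ε • k := by
    rintro h ⟨hh₁, hh₂⟩
    rw [← sub_nonneg]
    have key : ε • k - t • h = (2⁻¹ * (ε - t)) • (k + h) + (2⁻¹ * (ε + t)) • (k - h) := by
      module
    rw [key]
    exact add_nonneg (smul_nonneg (by linarith) (neg_le_iff_add_nonneg'.1 hh₁))
      (smul_nonneg (by linarith) (sub_nonneg.2 hh₂))
  refine ⟨?_, hle h hh⟩
  have := hle (-h) ⟨neg_le_neg hh.2, neg_le.1 hh.1⟩
  rwa [smul_neg, neg_le] at this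

theorem smul_sub_smul_mem_Icc {s lam ε : ℝ} {x y k : X} (hs : |s - lam| ≤ ε)
    (hy : y - x ∈ Icc (-k) k) (hx : x ∈ Icc (-c) c) :
    s • y - lam • x ∈ Icc (-(ε • k + |lam| • k + ε • c)) (ε • k + |lam| • k + ε • c) := by
  have key : s • y - lam • x = (s - lam) • (y - x) + lam • (y - x) + (s - lam) • x := by module
  obtain ⟨h₁, h₁'⟩ := smul_mem_Icc_neg_of_abs_le hs hy
  obtain ⟨h₂, h₂'⟩ := smul_mem_Icc_neg_of_abs_le le_rfl hy
  obtain ⟨h₃, h₃'⟩ := smul_mem_Icc_neg_of_abs_le hs hx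
  rw [key, neg_add, neg_add]
  exact ⟨add_le_add (add_le_add h₁ h₂) h₃, add_le_add (add_le_add h₁' h₂') h₃'⟩

theorem exists_smul_sandwich (harch : ∀ x y : X, (∀ n : ℕ, n • x ≤ y) → x ≤ 0)
    {I J : Type u} {rI : I → I → Prop} {rJ : J → J → Prop} (hI : IsNetIndex rI)
    (hJ : IsNetIndex rJ) {p q : I → ℝ} {lam : ℝ} {u v : J → X} {x : X}
    (hp : IncrTo rI p lam) (hq : DecrTo rI q lam) (hu : IncrTo rJ u x) (hv : DecrTo rJ v x)
    (hc : 0 ≤ c) (hxc : x ∈ Icc (-c) c) :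
    ∃ xh xl : I × J → X, IncrTo (ProdRel rI rJ) xh (lam • x) ∧
      DecrTo (ProdRel rI rJ) xl (lam • x) ∧
      ∀ (ij : I × J) (s : ℝ) (y : X), s ∈ Icc (p ij.1) (q ij.1) → y ∈ Icc (u ij.2) (v ij.2) →
        s • y ∈ Icc (xh ij) (xl ij) := by
  have := hI.1
  have := hJ.1
  have hIJ := hI.prod hJ
  have hε : DecrTo rI (q - p) 0 := by simpa only [sub_self] using hq.sub_incrTo hI hp
  have hk : DecrTo rJ (v - u) 0 := by simpa only [sub_self] using hv.sub_incrTo hJ hu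
  let D : I × J → X := fun ij =>
    (q - p) ij.1 • (v - u) ij.2 + |lam| • (v - u) ij.2 + (q - p) ij.1 • c
  have hD : DecrTo (ProdRel rI rJ) D 0 := by
    have h₁ := hε.comp_fst.smul hIJ le_rfl hk.comp_snd
    have h₂ := (decrTo_const |lam|).smul hIJ (abs_nonneg lam) (hk.comp_snd (r := rI))
    have h₃ := (hε.smul_const harch hc).comp_fst (rB := rJ)
    have h := (h₁.add hIJ h₂).add hIJ h₃
    rwa [add_zero, add_zero] at h
  have hxh := (incrTo_const (lam • x)).sub_decrTo hIJ hD
  have hxl := (decrTo_const (lam • x)).add hIJ hD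
  rw [sub_zero] at hxh
  rw [add_zero] at hxl
  refine ⟨_, _, hxh, hxl, fun ij s y hs hy => ?_⟩
  have hlam : lam ∈ Icc (p ij.1) (q ij.1) := ⟨hp.2.1 ⟨_, rfl⟩, hq.2.1 ⟨_, rfl⟩⟩
  have hx : x ∈ Icc (u ij.2) (v ij.2) := ⟨hu.2.1 ⟨_, rfl⟩, hv.2.1 ⟨_, rfl⟩⟩
  obtain ⟨hlow, hupp⟩ := smul_sub_smul_mem_Icc
    (abs_le.2 (sub_mem_Icc_neg_of_mem_Icc hs hlam)) (sub_mem_Icc_neg_of_mem_Icc hy hx) hxc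
  rw [neg_le, neg_sub] at hlow
  exact ⟨sub_le_comm.1 hlow, sub_le_iff_le_add'.1 hupp⟩

end OrderedVectorSpace

section SMulConvergence

variable {X : Type v} [AddCommGroup X] [PartialOrder X] [IsOrderedAddMonoid X] [Module ℝ X]
  [PosSMulMono ℝ X] {A B : Type u} {rA : A → A → Prop} {rB : B → B → Prop} {l : A → ℝ}
  {lam : ℝ} {g : B → X} {x c : X}

theorem OConv1.smul (harch : ∀ x y : X, (∀ n : ℕ, n • x ≤ y) → x ≤ 0) (hA : IsNetIndex rA)
    (hB : IsNetIndex rB) (hc : 0 ≤ c) (hxc : x ∈ Icc (-c) c) (hl : OConv1 rA l lam)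
    (hg : OConv1 rB g x) : OConv1 (ProdRel rA rB) (fun p => l p.1 • g p.2) (lam • x) := by
  obtain ⟨p, q, hp, hq, hl⟩ := hl
  obtain ⟨u, v, hu, hv, hg⟩ := hg
  obtain ⟨xh, xl, hxh, hxl, hsand⟩ := exists_smul_sandwich harch hA hB hp hq hu hv hc hxc
  exact ⟨xh, xl, hxh, hxl, fun ab => hsand ab _ _ (hl ab.1) (hg ab.2)⟩

theorem OConv2.smul (harch : ∀ x y : X, (∀ n : ℕ, n • x ≤ y) → x ≤ 0) (hA : IsNetIndex rA)
    (hB : IsNetIndex rB) (hc : 0 ≤ c) (hxc : x ∈ Icc (-c) c) (hl : OConv2 rA l lam)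
    (hg : OConv2 rB g x) : OConv2 (ProdRel rA rB) (fun p => l p.1 • g p.2) (lam • x) := by
  obtain ⟨p, q, a₀, hp, hq, hl⟩ := hl
  obtain ⟨u, v, b₀, hu, hv, hg⟩ := hg
  obtain ⟨xh, xl, hxh, hxl, hsand⟩ := exists_smul_sandwich harch hA hB hp hq hu hv hc hxc
  exact ⟨xh, xl, (a₀, b₀), hxh, hxl, fun ab h => hsand ab _ _ (hl ab.1 h.1) (hg ab.2 h.2)⟩

theorem OConv3.smul (harch : ∀ x y : X, (∀ n : ℕ, n • x ≤ y) → x ≤ 0) (hA : IsNetIndex rA)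
    (hB : IsNetIndex rB) (hc : 0 ≤ c) (hxc : x ∈ Icc (-c) c) (hl : OConv3 rA l lam)
    (hg : OConv3 rB g x) : OConv3 (ProdRel rA rB) (fun p => l p.1 • g p.2) (lam • x) := by
  obtain ⟨E₁, r₁, p, q, η₁, hE₁, hp, hq, hl⟩ := hl.exists_common_index
  obtain ⟨E₂, r₂, u, v, η₂, hE₂, hu, hv, hg⟩ := hg.exists_common_index
  obtain ⟨xh, xl, hxh, hxl, hsand⟩ := exists_smul_sandwich harch hE₁ hE₂ hp hq hu hv hc hxc
  exact OConv3.of_common_index (hA.prod hB) (hE₁.prod hE₂) hxh hxl (η := Prod.map η₁ η₂)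
    fun e ab h => hsand e _ _ (hl e.1 ab.1 h.1) (hg e.2 ab.2 h.2)

theorem OConv.smul (harch : ∀ x y : X, (∀ n : ℕ, n • x ≤ y) → x ≤ 0) (hA : IsNetIndex rA)
    (hB : IsNetIndex rB) (hc : 0 ≤ c) (hxc : x ∈ Icc (-c) c) :
    ∀ i, OConv i rA l lam → OConv i rB g x →
      OConv i (ProdRel rA rB) (fun p => l p.1 • g p.2) (lam • x)
  | 0 => OConv3.smul harch hA hB hc hxc
  | 1 => OConv1.smul harch hA hB hc hxc
  | 2 => OConv2.smul harch hA hB hc hxc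
  | _ + 3 => OConv3.smul harch hA hB hc hxc

end SMulConvergence

section

variable {X : Type v} [AddCommGroup X] [PartialOrder X] [Module ℝ X] [PosSMulMono ℝ X]
  {x : X}

theorem le_zero_of_nsmul_le_of_isGLB {C : Type u} {w : C → X} {y : X} (hw : IsGLB (range w) 0)
    (hwy : ∀ c, ∃ n : ℕ, ((n : ℝ) + 1)⁻¹ • y ≤ w c) (hxy : ∀ n : ℕ, n • x ≤ y) : x ≤ 0 := by
  refine hw.2 ?_
  rintro _ ⟨c, rfl⟩
  obtain ⟨n, hn⟩ := hwy c
  refine le_trans ?_ hn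
  rw [le_inv_smul_iff_of_pos n.cast_add_one_pos, ← Nat.cast_add_one, Nat.cast_smul_eq_nsmul]
  exact hxy (n + 1)

end

theorem archimedean_directed_iff_smul_oConv_general {X : Type v} [AddCommGroup X] [PartialOrder X] [IsOrderedAddMonoid X]
    [Module ℝ X] (hsmul : ∀ (l : ℝ) (x : X), 0 ≤ l → 0 ≤ x → 0 ≤ l • x)
    (i : ℕ) :
    ((∀ x y : X, (∀ n : ℕ, n • x ≤ y) → x ≤ 0) ∧
      (∀ x : X, ∃ a b : X, 0 ≤ a ∧ 0 ≤ b ∧ x = a - b)) ↔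
    (∀ (A B : Type u) (rA : A → A → Prop) (rB : B → B → Prop),
      IsNetIndex rA → IsNetIndex rB →
      ∀ (l : A → ℝ) (lam : ℝ) (g : B → X) (x : X),
        OConv i rA l lam → OConv i rB g x →
        OConv i (fun p q : A × B => rA p.1 q.1 ∧ rB p.2 q.2)
          (fun p : A × B => l p.1 • g p.2) (lam • x)) := by
  have : PosSMulMono ℝ X := .of_smul_nonneg fun a ha b hb => hsmul a b ha hb
  constructor
  · rintro ⟨harch, hdir⟩ A B rA rB hA hB l lam g x hl hg
    obtain ⟨a, b, ha, hb, rfl⟩ := hdir x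
    exact OConv.smul harch hA hB (add_nonneg ha hb) (sub_mem_Icc_neg_add ha hb) i hl hg
  intro H
  have hN : IsNetIndex (A := ULift.{u} ℕ) (· ≤ ·) := .of_directedOrder
  have hnull (y : X) : ∃ (C : Type u) (w : C → X), Nonempty C ∧ IsGLB (range w) 0 ∧
      ∀ c, ∃ n : ℕ, ((n : ℝ) + 1)⁻¹ • y ≤ w c := by
    have h := H _ _ _ _ hN hN _ 0 _ y (oConv1_inv_nat_add_one.oConv hN i)
      ((oConv1_const hN y).oConv hN i)
    rw [zero_smul] at h
    obtain ⟨C, w, hC, hw, hwy⟩ := h.exists_isGLB_dominating (hN.prod hN) i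
    exact ⟨C, w, hC, hw, fun c => let ⟨n, hn⟩ := hwy c; ⟨n.1.down, hn⟩⟩
  refine ⟨fun x y hxy => ?_, fun y => ?_⟩
  · obtain ⟨C, w, -, hw, hwy⟩ := hnull y
    exact le_zero_of_nsmul_le_of_isGLB hw hwy hxy
  · obtain ⟨C, w, ⟨c⟩, hw, hwy⟩ := hnull y
    obtain ⟨n, hn⟩ := hwy c
    exact exists_nonneg_sub_eq_of_le (smul_nonneg n.cast_add_one_pos.le (hw.1 ⟨c, rfl⟩))
      ((inv_smul_le_iff_of_pos n.cast_add_one_pos).1 hn)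

theorem archimedean_directed_iff_smul_oConv {X : Type v} [AddCommGroup X] [PartialOrder X] [IsOrderedAddMonoid X]
    [Module ℝ X] (hsmul : ∀ (l : ℝ) (x : X), 0 ≤ l → 0 ≤ x → 0 ≤ l • x)
    (i : ℕ) (hi : i ∈ ({1, 2, 3} : Set ℕ)) :
    ((∀ x y : X, (∀ n : ℕ, n • x ≤ y) → x ≤ 0) ∧
      (∀ x : X, ∃ a b : X, 0 ≤ a ∧ 0 ≤ b ∧ x = a - b)) ↔
    (∀ (A B : Type u) (rA : A → A → Prop) (rB : B → B → Prop),
      IsNetIndex rA → IsNetIndex rB →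
      ∀ (l : A → ℝ) (lam : ℝ) (g : B → X) (x : X),
        OConv i rA l lam → OConv i rB g x →
        OConv i (fun p q : A × B => rA p.1 q.1 ∧ rB p.2 q.2)
          (fun p : A × B => l p.1 • g p.2) (lam • x)) :=
  archimedean_directed_iff_smul_oConv_general hsmul i
end
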